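/- Let X be a Banach space isometrically isomorphic to the dual of a Banach space Y. Then the unit ball B_X is taut with respect to the weak* topology σ(X,Y): every net (f_α) in H(𝔻, B_X) admits either a compactly divergent subnet or a subnet converging in the weak* topology, uniformly on compact subsets of 𝔻, to some f ∈ H(𝔻, B_X). -/

import Mathlib

set_option maxHeartbeats 1000000

open Metric Set

universe u

notation "cabs" => (Norm.norm : ℂ → ℝ)

def HolBall {X : Type u} [NormedAddCommGroup X] [NormedSpace ℂ X] (f : ℂ → X) : Prop :=
  DifferentiableOn ℂ f (ball 0 1) ∧ MapsTo f (ball (0 : ℂ) 1) (ball (0 : X) 1)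

def IsCofinalMono {ι κ : Type u} [Preorder ι] [Preorder κ] (φ : κ → ι) : Prop :=
  Monotone φ ∧ ∀ i : ι, ∃ k : κ, i ≤ φ k

def CompactlyDivergent {X : Type u} [NormedAddCommGroup X] [NormedSpace ℂ X]
    (D : Set X) {κ : Type u} [Preorder κ] (f : κ → ℂ → X) : Prop :=
  ∀ K ⊆ ball (0 : ℂ) 1, IsCompact K → ∀ L ⊆ D, IsCompact L →
    ∃ k₀ : κ, ∀ k, k₀ ≤ k → ∀ ζ ∈ K, f k ζ ∉ L

/-- Weak*-convergence (via the pairing with `Y` through `e`), uniformly on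
compact subsets of the unit disc. -/
def ConvergesWeakStar {X : Type u} [NormedAddCommGroup X] [NormedSpace ℂ X]
    {Y : Type u} [NormedAddCommGroup Y] [NormedSpace ℂ Y]
    (e : X ≃ₗᵢ[ℂ] (Y →L[ℂ] ℂ)) {κ : Type u} [Preorder κ]
    (f : κ → ℂ → X) (g : ℂ → X) : Prop :=
  ∀ y : Y, ∀ K ⊆ ball (0 : ℂ) 1, IsCompact K → ∀ ε : ℝ, 0 < ε →
    ∃ k₀ : κ, ∀ k, k₀ ≤ k → ∀ ζ ∈ K, ‖e (f k ζ) y - e (g ζ) y‖ ≤ ε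

lemma mob_identity (a w : ℂ) :
    cabs (1 - (starRingEnd ℂ) a * w) ^ 2 - cabs (a - w) ^ 2
      = (1 - cabs a ^ 2) * (1 - cabs w ^ 2) := by
  rw [Complex.sq_norm, Complex.sq_norm, Complex.sq_norm, Complex.sq_norm]
  simp [Complex.normSq_apply, Complex.mul_re, Complex.mul_im, Complex.sub_re, Complex.sub_im]
  ring

lemma mob_denom_ne {a w : ℂ} (ha : cabs a < 1) (hw : cabs w < 1) :
    1 - (starRingEnd ℂ) a * w ≠ 0 := by
  intro h
  have h1 : cabs (1 - (starRingEnd ℂ) a * w) = 0 := by rw [h]; simp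
  have h2 : (0:ℝ) < (1 - cabs a ^ 2) * (1 - cabs w ^ 2) := by
    apply mul_pos <;> nlinarith [norm_nonneg a, norm_nonneg w]
  have := mob_identity a w
  rw [h1] at this
  nlinarith [norm_nonneg (a - w), sq_nonneg (cabs (a-w))]

lemma schwarz_pick_zero {h : ℂ → ℂ} (hd : DifferentiableOn ℂ h (ball 0 1))
    (hm : MapsTo h (ball (0:ℂ) 1) (ball (0:ℂ) 1)) {z : ℂ} (hz : z ∈ ball (0:ℂ) 1) :
    cabs (h 0 - h z) ≤
      cabs z * cabs (1 - (starRingEnd ℂ) (h 0) * (h z)) := by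
  set a := h 0 with ha_def
  have h0mem : (0:ℂ) ∈ ball (0:ℂ) 1 := by simp
  have ha : cabs a < 1 := by
    have := hm h0mem; rwa [mem_ball_zero_iff] at this
  set M : ℂ → ℂ := fun w => (a - w) / (1 - (starRingEnd ℂ) a * w) with hM_def
  have hMd : DifferentiableOn ℂ M (ball 0 1) := by
    intro w hw
    have hw' : cabs w < 1 := by rwa [mem_ball_zero_iff] at hw
    exact (((differentiableAt_const a).sub differentiableAt_id).div
      ((differentiableAt_const 1).sub ((differentiableAt_const _).mul differentiableAt_id))
      (mob_denom_ne ha hw')).differentiableWithinAt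
  have hMm : MapsTo M (ball (0:ℂ) 1) (ball (0:ℂ) 1) := by
    intro w hw
    have hw' : cabs w < 1 := by rwa [mem_ball_zero_iff] at hw
    have hden : 0 < cabs (1 - (starRingEnd ℂ) a * w) :=
      norm_pos_iff.mpr (mob_denom_ne ha hw')
    rw [mem_ball_zero_iff]
    show cabs _ < 1
    rw [hM_def]
    simp only [norm_div]
    rw [div_lt_one hden]
    have hp : (0:ℝ) < (1 - cabs a ^ 2) * (1 - cabs w ^ 2) :=
      mul_pos (by nlinarith [norm_nonneg a]) (by nlinarith [norm_nonneg w])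
    refine lt_of_pow_lt_pow_left₀ 2 hden.le ?_
    nlinarith [mob_identity a w]
  have hg : DifferentiableOn ℂ (M ∘ h) (ball 0 1) := hMd.comp hd hm
  have hg0 : (M ∘ h) 0 = 0 := by simp [hM_def, ← ha_def]
  have hz' : cabs z < 1 := by rwa [mem_ball_zero_iff] at hz
  have hs := Complex.norm_le_norm_of_mapsTo_ball hg ((hMm.comp hm).mono_right ball_subset_closedBall) hg0 hz'
  have hhz : cabs (h z) < 1 := by
    have := hm hz; rwa [mem_ball_zero_iff] at this
  have hden : 0 < cabs (1 - (starRingEnd ℂ) a * h z) :=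
    norm_pos_iff.mpr (mob_denom_ne ha hhz)
  have : cabs ((M ∘ h) z) = cabs (a - h z) / cabs (1 - (starRingEnd ℂ) a * h z) := by
    simp [hM_def, map_div₀]
  rw [this, div_le_iff₀ hden] at hs
  exact hs

lemma schwarz_lower_bound {h : ℂ → ℂ} (hd : DifferentiableOn ℂ h (ball 0 1))
    (hm : MapsTo h (ball (0:ℂ) 1) (ball (0:ℂ) 1)) {z : ℂ} {R : ℝ}
    (hz : z ∈ ball (0:ℂ) 1) (hzR : cabs z ≤ R) (hR : R < 1) :
    cabs (h 0) - (R / Real.sqrt (1 - R ^ 2)) * Real.sqrt (1 - cabs (h 0) ^ 2)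
      ≤ cabs (h z) := by
  have hR0 : 0 ≤ R := le_trans (norm_nonneg z) hzR
  set a := h 0 with ha_def
  set b := h z with hb_def
  have ha : cabs a < 1 := by
    have := hm (by simp : (0:ℂ) ∈ ball (0:ℂ) 1); rwa [mem_ball_zero_iff] at this
  have hb : cabs b < 1 := by
    have := hm hz; rwa [mem_ball_zero_iff] at this
  have hsp := schwarz_pick_zero hd hm hz
  have hsp2 : cabs (a - b) ≤ R * cabs (1 - (starRingEnd ℂ) a * b) :=
    le_trans hsp (mul_le_mul_of_nonneg_right hzR (norm_nonneg _))
  have hid := mob_identity a b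
  set d := cabs (a - b) with hd_def
  set D := cabs (1 - (starRingEnd ℂ) a * b) with hD_def
  -- d^2 * (1 - R^2) ≤ R^2 * (1 - |a|^2)
  have key : d ^ 2 * (1 - R ^ 2) ≤ R ^ 2 * (1 - cabs a ^ 2) := by
    have hd2 : d ^ 2 ≤ R ^ 2 * D ^ 2 := by
      have := mul_le_mul hsp2 hsp2 (norm_nonneg _) (by positivity)
      nlinarith
    nlinarith [norm_nonneg b, norm_nonneg a, sq_nonneg (cabs b),
      mul_nonneg (mul_nonneg (sq_nonneg R) (by nlinarith [norm_nonneg a] :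
        (0:ℝ) ≤ 1 - cabs a ^ 2)) (sq_nonneg (cabs b))]
  have hRlt : (0:ℝ) < 1 - R ^ 2 := by nlinarith
  have hsq : d ≤ (R / Real.sqrt (1 - R ^ 2)) * Real.sqrt (1 - cabs a ^ 2) := by
    have hrhs : ((R / Real.sqrt (1 - R ^ 2)) * Real.sqrt (1 - cabs a ^ 2)) ^ 2
        = R ^ 2 * (1 - cabs a ^ 2) / (1 - R ^ 2) := by
      rw [mul_pow, div_pow, Real.sq_sqrt hRlt.le,
        Real.sq_sqrt (by nlinarith [norm_nonneg a] : (0:ℝ) ≤ 1 - cabs a ^ 2)]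
      ring
    have h1 : d ^ 2 ≤ R ^ 2 * (1 - cabs a ^ 2) / (1 - R ^ 2) := by
      rw [le_div_iff₀ hRlt]; linarith
    calc d = Real.sqrt (d ^ 2) := (Real.sqrt_sq (norm_nonneg _)).symm
    _ ≤ Real.sqrt (((R / Real.sqrt (1 - R ^ 2)) * Real.sqrt (1 - cabs a ^ 2)) ^ 2) := by
        apply Real.sqrt_le_sqrt; rw [hrhs]; exact h1
    _ = (R / Real.sqrt (1 - R ^ 2)) * Real.sqrt (1 - cabs a ^ 2) := by
        apply Real.sqrt_sq; positivity
  have htri : cabs a - d ≤ cabs b := by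
    have := norm_sub_norm_le a b
    simp only [← hd_def] at this; linarith [this]
  linarith


lemma holball_coeffs {X : Type*} [NormedAddCommGroup X] [NormedSpace ℂ X] [CompleteSpace X]
    {f : ℂ → X} (hf : HolBall f) :
    ∃ a : ℕ → X, (∀ n, ‖a n‖ ≤ 1) ∧ ∀ ζ ∈ ball (0:ℂ) 1, HasSum (fun n => ζ ^ n • a n) (f ζ) := by
  obtain ⟨hd, hm⟩ := hf
  have hnorm : ∀ z ∈ ball (0:ℂ) 1, ‖f z‖ ≤ 1 := fun z hz =>
    le_of_lt (mem_ball_zero_iff.1 (hm hz))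
  have hball : ∀ r : NNReal, 0 < r → (r:ℝ) < 1 →
      HasFPowerSeriesOnBall f (cauchyPowerSeries f 0 r) 0 r := by
    intro r hr hr1
    exact (hd.mono (closedBall_subset_ball hr1)).hasFPowerSeriesOnBall hr
  have h2 : (0:ℝ) < 1/2 := by norm_num
  have hp := hball ((1:NNReal)/2) (by norm_num) (by norm_num)
  set p := cauchyPowerSeries f 0 (((1:NNReal)/2 : NNReal) : ℝ) with hp_def
  have huniq : ∀ r : NNReal, 0 < r → (r:ℝ) < 1 → cauchyPowerSeries f 0 r = p := fun r h1 h2 =>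
    (hball r h1 h2).hasFPowerSeriesAt.eq_formalMultilinearSeries hp.hasFPowerSeriesAt
  refine ⟨p.coeff, ?_, ?_⟩
  · intro n
    have key : ∀ r : ℝ, 0 < r → r < 1 → ‖p.coeff n‖ * r ^ n ≤ 1 := by
      intro r hr hr1
      lift r to NNReal using hr.le with r' hr'
      have hr0' : 0 < r' := by exact_mod_cast hr
      have hcm : ∀ θ : ℝ, circleMap 0 (r':ℝ) θ ∈ ball (0:ℂ) 1 := by
        intro θ
        rw [mem_ball_zero_iff, norm_circleMap_zero]
        rwa [abs_of_pos hr]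
      have hcont : Continuous fun θ : ℝ => ‖f (circleMap 0 (r':ℝ) θ)‖ :=
        (hd.continuousOn.comp_continuous (continuous_circleMap 0 _) hcm).norm
      have hint : (∫ θ : ℝ in (0)..2 * Real.pi, ‖f (circleMap 0 (r':ℝ) θ)‖) ≤ 2 * Real.pi := by
        have := intervalIntegral.integral_mono_on (by positivity : (0:ℝ) ≤ 2 * Real.pi)
          (hcont.intervalIntegrable (μ := MeasureTheory.volume) 0 (2*Real.pi)) (intervalIntegrable_const (c := (1:ℝ)))
          (fun x _ => hnorm _ (hcm x))
        simpa using this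
      have hb := norm_cauchyPowerSeries_le f 0 (r':ℝ) n
      rw [huniq r' hr0' hr1] at hb
      have hb2 : ‖p n‖ ≤ |(r':ℝ)|⁻¹ ^ n := by
        refine le_trans hb ?_
        have h1 : (2 * Real.pi)⁻¹ * (∫ θ : ℝ in (0)..2 * Real.pi,
            ‖f (circleMap 0 (r':ℝ) θ)‖) ≤ 1 := by
          rw [inv_mul_le_iff₀ (by positivity)]
          simpa using hint
        have : (0:ℝ) ≤ |(r':ℝ)|⁻¹ ^ n := by positivity
        nlinarith
      rw [abs_of_pos hr] at hb2
      have := FormalMultilinearSeries.norm_apply_eq_norm_coef (p := p) (n := n)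
      rw [← this]
      calc ‖p n‖ * (r':ℝ) ^ n ≤ ((r':ℝ)⁻¹ ^ n) * (r':ℝ) ^ n :=
            mul_le_mul_of_nonneg_right hb2 (by positivity)
        _ = 1 := by rw [← mul_pow, inv_mul_cancel₀ hr.ne']; simp
    have htend : Filter.Tendsto (fun r : ℝ => ‖p.coeff n‖ * r ^ n) (nhdsWithin 1 (Iio 1))
        (nhds (‖p.coeff n‖ * 1 ^ n)) :=
      ((continuous_const.mul (continuous_pow n)).tendsto 1).mono_left nhdsWithin_le_nhds
    have hev : ∀ᶠ r : ℝ in nhdsWithin 1 (Iio 1), ‖p.coeff n‖ * r ^ n ≤ 1 := by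
      filter_upwards [Ioo_mem_nhdsLT_of_mem (by norm_num : (1:ℝ) ∈ Ioc (0:ℝ) 1)] with r hr
      exact key r hr.1 hr.2
    have := le_of_tendsto htend hev
    simpa using this
  · intro ζ hζ
    have hζ' : cabs ζ < 1 := by rwa [mem_ball_zero_iff] at hζ
    set r : NNReal := Real.toNNReal ((1 + cabs ζ)/2) with hr_def
    have hrval : (r:ℝ) = (1 + cabs ζ)/2 := by
      rw [hr_def, Real.coe_toNNReal]; positivity
    have hr0 : 0 < r := by
      rw [← NNReal.coe_lt_coe, hrval]; simp; positivity
    have hr1 : (r:ℝ) < 1 := by rw [hrval]; linarith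
    have hζr : cabs ζ < (r:ℝ) := by rw [hrval]; linarith [norm_nonneg ζ]
    have hmem : ζ ∈ Metric.eball (0:ℂ) r := by
      rw [mem_eball_zero_iff, enorm_eq_nnnorm, ENNReal.coe_lt_coe, ← NNReal.coe_lt_coe, coe_nnnorm]
      exact hζr
    have hsum := (hball r hr0 hr1).hasSum hmem
    rw [huniq r hr0 hr1] at hsum
    simp only [FormalMultilinearSeries.apply_eq_pow_smul_coeff, zero_add] at hsum
    exact hsum

theorem stmt16 {X : Type u} [NormedAddCommGroup X] [NormedSpace ℂ X]
    {Y : Type u} [NormedAddCommGroup Y] [NormedSpace ℂ Y] [CompleteSpace Y]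
    (e : X ≃ₗᵢ[ℂ] (Y →L[ℂ] ℂ))
    (ι : Type u) (pι : Preorder ι) (hne : Nonempty ι)
    (hdir : IsDirected ι fun a b => @LE.le ι pι.toLE a b)
    (f : ι → ℂ → X) (hf : ∀ i, HolBall (f i)) :
    (∃ (κ : Type u) (pκ : Preorder κ) (_ : Nonempty κ)
        (_ : IsDirected κ fun a b => @LE.le κ pκ.toLE a b) (φ : κ → ι),
        @IsCofinalMono ι κ pι pκ φ ∧
        @CompactlyDivergent X _ _ (ball (0 : X) 1) κ pκ (f ∘ φ)) ∨
    (∃ (κ : Type u) (pκ : Preorder κ) (_ : Nonempty κ)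
        (_ : IsDirected κ fun a b => @LE.le κ pκ.toLE a b) (φ : κ → ι) (g : ℂ → X),
        @IsCofinalMono ι κ pι pκ φ ∧ HolBall g ∧
        @ConvergesWeakStar X _ _ Y _ _ e κ pκ (f ∘ φ) g) := by
  letI := pι
  haveI := hne
  haveI : IsDirected ι (· ≤ ·) := hdir
  haveI : CompleteSpace X := e.toIsometryEquiv.completeSpace
  choose a ha1 ha2 using fun i => holball_coeffs (hf i)
  -- the coefficient net in the product of weak* balls
  set T := (ℕ → WeakDual ℂ Y) with hT_def
  set c : ι → T := fun i n => WeakDual.toStrongDual.symm (e (a i n)) with hc_def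
  have hc_apply : ∀ i n (y : Y), c i n y = e (a i n) y := fun i n y => rfl
  set S : Set T := univ.pi (fun _ : ℕ => WeakDual.toStrongDual ⁻¹' closedBall 0 1) with hS_def
  have hScomp : IsCompact S := isCompact_univ_pi fun _ => WeakDual.isCompact_closedBall (𝕜 := ℂ) (E := Y) 0 1
  have hcS : ∀ i, c i ∈ S := by
    intro i
    rw [hS_def, mem_univ_pi]
    intro n
    have h1 : WeakDual.toStrongDual (c i n) = e (a i n) := rfl
    rw [mem_preimage, h1, mem_closedBall_zero_iff, e.norm_map]
    exact ha1 i n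
  set F : Filter T := Filter.map c Filter.atTop with hF_def
  haveI : F.NeBot := Filter.map_neBot
  have hFS : F ≤ Filter.principal S :=
    Filter.le_principal_iff.2 (Filter.mem_map.2 (Filter.univ_mem' hcS))
  obtain ⟨x, hxS, hx⟩ := hScomp.exists_clusterPt hFS
  have key : ∀ U ∈ nhds x, ∀ i₀ : ι, ∃ i, i₀ ≤ i ∧ c i ∈ U := by
    intro U hU i₀
    have h2 : c '' {i | i₀ ≤ i} ∈ F := Filter.image_mem_map (Filter.mem_atTop i₀)
    obtain ⟨z, hzU, i, hi, rfl⟩ := clusterPt_iff_nonempty.1 hx hU h2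
    exact ⟨i, hi, hzU⟩
  -- the subnet index
  set κ := {q : ι × Set T // q.2 ∈ nhds x ∧ c q.1 ∈ q.2} with hκ_def
  letI pκ : Preorder κ :=
    { le := fun p q => p.1.1 ≤ q.1.1 ∧ q.1.2 ⊆ p.1.2
      le_refl := fun p => ⟨le_refl _, subset_rfl⟩
      le_trans := fun p q r h1 h2 => ⟨le_trans h1.1 h2.1, h2.2.trans h1.2⟩
      lt := fun p q => (p.1.1 ≤ q.1.1 ∧ q.1.2 ⊆ p.1.2) ∧ ¬(q.1.1 ≤ p.1.1 ∧ p.1.2 ⊆ q.1.2)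
      lt_iff_le_not_ge := fun _ _ => Iff.rfl }
  haveI hκne : Nonempty κ := ⟨⟨(Classical.arbitrary ι, univ), Filter.univ_mem, mem_univ _⟩⟩
  have hκdir : IsDirected κ fun a b => @LE.le κ pκ.toLE a b := by
    constructor
    intro p q
    obtain ⟨j, hj1, hj2⟩ := exists_ge_ge p.1.1 q.1.1
    have hW : p.1.2 ∩ q.1.2 ∈ nhds x := Filter.inter_mem p.2.1 q.2.1
    obtain ⟨i, hij, hiW⟩ := key _ hW j
    refine ⟨⟨(i, p.1.2 ∩ q.1.2), hW, hiW⟩, ?_, ?_⟩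
    · exact ⟨hj1.trans hij, inter_subset_left⟩
    · exact ⟨hj2.trans hij, inter_subset_right⟩
  set φ : κ → ι := fun q => q.1.1 with hφ_def
  have hcofmono : @IsCofinalMono ι κ pι pκ φ := by
    constructor
    · intro a b hab
      exact hab.1
    · intro i
      exact ⟨⟨(i, univ), Filter.univ_mem, mem_univ _⟩, le_refl i⟩
  have conv : ∀ U ∈ nhds x, ∃ k₀ : κ, ∀ k, @LE.le κ pκ.toLE k₀ k → c (φ k) ∈ U := by
    intro U hU
    obtain ⟨i, -, hiU⟩ := key U hU (Classical.arbitrary ι)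
    refine ⟨⟨(i, U), hU, hiU⟩, fun k hk => ?_⟩
    exact hk.2 k.2.2
  -- the limit coefficients and limit function
  set b : ℕ → X := fun n => e.symm (WeakDual.toStrongDual (x n)) with hb_def
  have hb1 : ∀ n, ‖b n‖ ≤ 1 := by
    intro n
    rw [hb_def]
    rw [e.symm.norm_map]
    exact mem_closedBall_zero_iff.1 (mem_univ_pi.1 hxS n)
  have heb : ∀ n (y : Y), e (b n) y = x n y := by
    intro n y
    rw [hb_def, e.apply_symm_apply]
    rfl
  set qs : FormalMultilinearSeries ℂ ℂ X :=
    fun n => ContinuousMultilinearMap.mkPiRing ℂ (Fin n) (b n) with hqs_def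
  have hqs_coeff : ∀ n, qs.coeff n = b n := by
    intro n
    simp [hqs_def, FormalMultilinearSeries.coeff, ContinuousMultilinearMap.mkPiRing_apply]
  have hqs_rad : 1 ≤ qs.radius := by
    have := qs.le_radius_of_bound 1 (r := 1) (fun n => by
      rw [hqs_def]
      simp only [ContinuousMultilinearMap.norm_mkPiRing, NNReal.coe_one, one_pow, mul_one]
      exact hb1 n)
    simpa using this
  set g : ℂ → X := qs.sum with hg_def
  have hgball : HasFPowerSeriesOnBall g qs 0 1 :=
    (qs.hasFPowerSeriesOnBall (lt_of_lt_of_le one_pos hqs_rad)).mono one_pos hqs_rad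
  have hgd : DifferentiableOn ℂ g (ball 0 1) := by
    have := hgball.differentiableOn
    have h1 : Metric.eball (0:ℂ) 1 = ball (0:ℂ) (1:ℝ) := by
      rw [← ENNReal.ofReal_one, Metric.emetric_ball]
    rwa [h1] at this
  have hg_sum : ∀ ζ ∈ ball (0:ℂ) 1, HasSum (fun n => ζ ^ n • b n) (g ζ) := by
    intro ζ hζ
    have hmem : ζ ∈ Metric.eball (0:ℂ) 1 := by
      have h1 : Metric.eball (0:ℂ) 1 = ball (0:ℂ) (1:ℝ) := by
        rw [← ENNReal.ofReal_one, Metric.emetric_ball]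
      rwa [h1]
    have := hgball.hasSum hmem
    simp only [FormalMultilinearSeries.apply_eq_pow_smul_coeff, hqs_coeff, zero_add] at this
    exact this
  -- pairing of the sums with a functional
  have hpair : ∀ (y : Y) (u : ℂ → X) (w : ℕ → X) (ζ : ℂ), ζ ∈ ball (0:ℂ) 1 →
      HasSum (fun n => ζ ^ n • w n) (u ζ) →
      HasSum (fun n => ζ ^ n * (e (w n) y)) (e (u ζ) y) := by
    intro y u w ζ hζ hsum
    have Λ : X →L[ℂ] ℂ :=
      (ContinuousLinearMap.apply ℂ ℂ y).comp e.toLinearIsometry.toContinuousLinearMap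
    have := hsum.mapL ((ContinuousLinearMap.apply ℂ ℂ y).comp
      e.toLinearIsometry.toContinuousLinearMap)
    simpa [smul_eq_mul] using this
  -- the key uniform convergence of the subnet
  have hmain : ∀ y : Y, ∀ K ⊆ ball (0 : ℂ) 1, IsCompact K → ∀ ε : ℝ, 0 < ε →
      ∃ k₀ : κ, ∀ k, @LE.le κ pκ.toLE k₀ k → ∀ ζ ∈ K,
        ‖e (f (φ k) ζ) y - e (g ζ) y‖ ≤ ε := by
    intro y K hK hKc ε hε
    rcases K.eq_empty_or_nonempty with rfl | hKne
    · exact ⟨Classical.arbitrary κ, fun k _ ζ hζ => absurd hζ (notMem_empty ζ)⟩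
    obtain ⟨z₀, hz₀K, hz₀max⟩ := hKc.exists_isMaxOn hKne continuous_norm.continuousOn
    set R := cabs z₀ with hR_def
    have hR0 : 0 ≤ R := norm_nonneg z₀
    have hR1 : R < 1 := mem_ball_zero_iff.1 (hK hz₀K)
    have hRζ : ∀ ζ ∈ K, cabs ζ ≤ R := fun ζ hζ => hz₀max hζ
    -- choose the tail cutoff
    have htendN : Filter.Tendsto (fun N : ℕ => R ^ N) Filter.atTop (nhds 0) :=
      tendsto_pow_atTop_nhds_zero_of_lt_one hR0 hR1
    have h1R : (0:ℝ) < 1 - R := by linarith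
    have hδ0 : 0 < (ε / 2) * (1 - R) / (2 * (‖y‖ + 1)) :=
      div_pos (mul_pos (by positivity) h1R) (by positivity)
    obtain ⟨N, hN⟩ := (htendN.eventually (gt_mem_nhds hδ0)).exists
    set δ := ε / (4 * (N + 1)) with hδ_def
    have hδpos : 0 < δ := by positivity
    set U : Set T := ⋂ n ∈ Finset.range N, {u : T | ‖u n y - x n y‖ < δ} with hU_def
    have hU : U ∈ nhds x := by
      rw [hU_def]
      refine (Filter.biInter_finset_mem _).2 fun n _ => ?_
      have hcont : Continuous fun u : T => u n y :=
        (WeakDual.eval_continuous y).comp (continuous_apply n)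
      have hopen : IsOpen {u : T | ‖u n y - x n y‖ < δ} := by
        have : {u : T | ‖u n y - x n y‖ < δ} =
            (fun u : T => u n y) ⁻¹' Metric.ball (x n y) δ := by
          ext u; simp [Metric.mem_ball, dist_eq_norm]
        rw [this]
        exact Metric.isOpen_ball.preimage hcont
      exact hopen.mem_nhds (by simp [hδpos])
    obtain ⟨k₀, hk₀⟩ := conv U hU
    refine ⟨k₀, fun k hk ζ hζK => ?_⟩
    have hζ : ζ ∈ ball (0:ℂ) 1 := hK hζK
    have hζ1 : cabs ζ < 1 := mem_ball_zero_iff.1 hζ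
    have hζR : cabs ζ ≤ R := hRζ ζ hζK
    set i := φ k with hi_def
    have hsmall : ∀ n < N, ‖e (a i n) y - x n y‖ < δ := by
      intro n hn
      have := hk₀ k hk
      rw [hU_def, mem_iInter₂] at this
      exact this n (Finset.mem_range.2 hn)
    set t : ℕ → ℂ := fun n => ζ ^ n * (e (a i n) y - x n y) with ht_def
    have hS1 := hpair y (f i) (a i) ζ hζ (ha2 i ζ hζ)
    have hS2 := hpair y g b ζ hζ (hg_sum ζ hζ)
    have hS2' : HasSum (fun n => ζ ^ n * (x n y)) (e (g ζ) y) := by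
      refine hS2.congr_fun fun n => ?_
      rw [heb]
    have hS : HasSum t (e (f i ζ) y - e (g ζ) y) := by
      have := hS1.sub hS2'
      refine this.congr_fun fun n => ?_
      rw [ht_def]
      ring
    -- bounds on the terms
    have hbound : ∀ n, ‖t n‖ ≤ R ^ n * (2 * (‖y‖ + 1)) := by
      intro n
      rw [ht_def]
      have h1 : ‖e (a i n) y‖ ≤ ‖y‖ := by
        calc ‖e (a i n) y‖ ≤ ‖e (a i n)‖ * ‖y‖ := (e (a i n)).le_opNorm y
        _ ≤ 1 * ‖y‖ := by
            refine mul_le_mul_of_nonneg_right ?_ (norm_nonneg y)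
            rw [e.norm_map]; exact ha1 i n
        _ = ‖y‖ := one_mul _
      have h2 : ‖x n y‖ ≤ ‖y‖ := by
        calc ‖x n y‖ ≤ ‖WeakDual.toStrongDual (x n)‖ * ‖y‖ :=
              (WeakDual.toStrongDual (x n)).le_opNorm y
        _ ≤ 1 * ‖y‖ := mul_le_mul_of_nonneg_right
              (mem_closedBall_zero_iff.1 (mem_univ_pi.1 hxS n)) (norm_nonneg y)
        _ = ‖y‖ := one_mul _
      have h3 : ‖e (a i n) y - x n y‖ ≤ 2 * (‖y‖ + 1) := by
        calc ‖e (a i n) y - x n y‖ ≤ ‖e (a i n) y‖ + ‖x n y‖ := norm_sub_le _ _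
        _ ≤ 2 * (‖y‖ + 1) := by linarith [norm_nonneg y]
      calc ‖ζ ^ n * (e (a i n) y - x n y)‖
          = cabs ζ ^ n * ‖e (a i n) y - x n y‖ := by
            rw [norm_mul, norm_pow]
        _ ≤ R ^ n * (2 * (‖y‖ + 1)) := by
            refine mul_le_mul (pow_le_pow_left₀ (norm_nonneg ζ) hζR n) h3
              (norm_nonneg _) (by positivity)
    -- split the sum
    have hsummable := hS.summable
    have hsplit := Summable.sum_add_tsum_nat_add (f := t) N hsummable
    have htsum : e (f i ζ) y - e (g ζ) y = ∑' n, t n := hS.tsum_eq.symm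
    -- tail bound
    have htail_term : ∀ m : ℕ, ‖t (m + N)‖ ≤ (R ^ N * (2 * (‖y‖ + 1))) * R ^ m := by
      intro m
      calc ‖t (m + N)‖ ≤ R ^ (m + N) * (2 * (‖y‖ + 1)) := hbound (m + N)
      _ = (R ^ N * (2 * (‖y‖ + 1))) * R ^ m := by rw [pow_add]; ring
    have hgeo : Summable (fun m : ℕ => (R ^ N * (2 * (‖y‖ + 1))) * R ^ m) :=
      (summable_geometric_of_lt_one hR0 hR1).mul_left _
    have htail : ‖∑' m, t (m + N)‖ ≤ (R ^ N * (2 * (‖y‖ + 1))) * (1 - R)⁻¹ := by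
      calc ‖∑' m, t (m + N)‖ ≤ ∑' m, ‖t (m + N)‖ :=
            norm_tsum_le_tsum_norm ((hsummable.comp_injective (add_left_injective N)).norm)
      _ ≤ ∑' m, (R ^ N * (2 * (‖y‖ + 1))) * R ^ m :=
            Summable.tsum_le_tsum htail_term ((hsummable.comp_injective (add_left_injective N)).norm) hgeo
      _ = (R ^ N * (2 * (‖y‖ + 1))) * ∑' m, R ^ m := tsum_mul_left
      _ = (R ^ N * (2 * (‖y‖ + 1))) * (1 - R)⁻¹ := by
            rw [tsum_geometric_of_lt_one hR0 hR1]
    have htail2 : (R ^ N * (2 * (‖y‖ + 1))) * (1 - R)⁻¹ ≤ ε / 2 := by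
      have h1R : 0 < 1 - R := by linarith
      rw [mul_inv_le_iff₀ h1R]
      have := hN.le
      calc R ^ N * (2 * (‖y‖ + 1)) ≤ ((ε / 2) * (1 - R) / (2 * (‖y‖ + 1))) * (2 * (‖y‖ + 1)) := by
            refine mul_le_mul_of_nonneg_right this (by positivity)
      _ = ε / 2 * (1 - R) := by field_simp
    -- head bound
    have hhead : ‖∑ n ∈ Finset.range N, t n‖ ≤ ε / 2 := by
      calc ‖∑ n ∈ Finset.range N, t n‖ ≤ ∑ n ∈ Finset.range N, ‖t n‖ :=
            norm_sum_le _ _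
      _ ≤ ∑ n ∈ Finset.range N, δ := by
            refine Finset.sum_le_sum fun n hn => ?_
            rw [ht_def]
            calc ‖ζ ^ n * (e (a i n) y - x n y)‖
                = cabs ζ ^ n * ‖e (a i n) y - x n y‖ := by
                  rw [norm_mul, norm_pow]
            _ ≤ 1 * δ := by
                refine mul_le_mul (pow_le_one₀ (norm_nonneg ζ) hζ1.le)
                  (hsmall n (Finset.mem_range.1 hn)).le (norm_nonneg _) zero_le_one
            _ = δ := one_mul _
      _ = N * δ := by rw [Finset.sum_const, Finset.card_range, nsmul_eq_mul]
      _ ≤ ε / 2 := by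
            rw [hδ_def]
            rw [show (N:ℝ) * (ε / (4 * ((N:ℝ) + 1))) = ε * N / (4 * ((N:ℝ)+1)) by ring]
            rw [div_le_div_iff₀ (by positivity) two_pos]
            nlinarith [hε.le, Nat.cast_nonneg (α := ℝ) N,
              mul_nonneg hε.le (Nat.cast_nonneg (α := ℝ) N)]
    calc ‖e (f i ζ) y - e (g ζ) y‖ = ‖∑' n, t n‖ := by rw [htsum]
      _ = ‖(∑ n ∈ Finset.range N, t n) + ∑' m, t (m + N)‖ := by rw [hsplit]
      _ ≤ ‖∑ n ∈ Finset.range N, t n‖ + ‖∑' m, t (m + N)‖ := norm_add_le _ _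
      _ ≤ ε / 2 + ε / 2 := add_le_add hhead (htail.trans htail2)
      _ = ε := by ring
  -- the limit takes values in the closed unit ball
  have hg_le : ∀ ζ ∈ ball (0:ℂ) 1, ‖g ζ‖ ≤ 1 := by
    intro ζ hζ
    rw [← e.norm_map]
    refine ContinuousLinearMap.opNorm_le_bound _ zero_le_one fun y => ?_
    rw [one_mul]
    by_contra hcon
    push_neg at hcon
    set ε := (‖e (g ζ) y‖ - ‖y‖) / 2 with hε_def
    have hεpos : 0 < ε := by rw [hε_def]; linarith
    obtain ⟨k₀, hk₀⟩ := hmain y {ζ} (singleton_subset_iff.2 hζ) isCompact_singleton ε hεpos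
    have h1 := hk₀ k₀ (le_refl k₀) ζ (mem_singleton ζ)
    have h2 : ‖e (f (φ k₀) ζ) y‖ ≤ ‖y‖ := by
      calc ‖e (f (φ k₀) ζ) y‖ ≤ ‖e (f (φ k₀) ζ)‖ * ‖y‖ := (e _).le_opNorm y
      _ ≤ 1 * ‖y‖ := by
          refine mul_le_mul_of_nonneg_right ?_ (norm_nonneg y)
          rw [e.norm_map]
          exact (mem_ball_zero_iff.1 ((hf (φ k₀)).2 hζ)).le
      _ = ‖y‖ := one_mul _
    have h3 : ‖e (g ζ) y‖ ≤ ‖e (f (φ k₀) ζ) y‖ + ε := by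
      have := norm_sub_norm_le (e (g ζ) y) (e (f (φ k₀) ζ) y)
      rw [← norm_neg (e (g ζ) y - e (f (φ k₀) ζ) y), neg_sub] at this
      linarith [this.trans h1]
    rw [hε_def] at h3
    linarith
  by_cases hcase : ∀ ζ ∈ ball (0:ℂ) 1, ‖g ζ‖ < 1
  · -- the weak* convergent case
    right
    exact ⟨κ, pκ, hκne, hκdir, φ, g, hcofmono,
      ⟨hgd, fun ζ hζ => mem_ball_zero_iff.2 (hcase ζ hζ)⟩, hmain⟩
  · -- the compactly divergent case
    left
    push_neg at hcase
    obtain ⟨ζ₀, hζ₀, hζ₀1⟩ := hcase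
    have hg1 : ‖g ζ₀‖ = 1 := le_antisymm (hg_le ζ₀ hζ₀) hζ₀1
    -- maximum modulus: the norm is 1 at the origin as well
    have hmax : IsMaxOn (norm ∘ g) (ball (0:ℂ) 1) ζ₀ := by
      intro z hz
      simp only [Function.comp_apply, mem_setOf_eq, hg1]
      exact hg_le z hz
    have heq := Complex.norm_eqOn_of_isPreconnected_of_isMaxOn
      (convex_ball (0:ℂ) 1).isPreconnected isOpen_ball hgd hζ₀ hmax
    have hg0 : ‖g 0‖ = 1 := by
      have := heq (mem_ball_self one_pos)
      simp only [Function.comp_apply, Function.const_apply] at this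
      rw [this, hg1]
    -- the norms at the origin tend to 1 along the subnet
    have hnear1 : ∀ ε : ℝ, 0 < ε → ∃ k₀ : κ, ∀ k, @LE.le κ pκ.toLE k₀ k →
        1 - ε < ‖f (φ k) 0‖ := by
      intro ε hε
      have hlt : 1 - ε / 2 < ‖e (g 0)‖ := by rw [e.norm_map, hg0]; linarith
      obtain ⟨y, hy1, hy2⟩ := (e (g 0)).exists_lt_apply_of_lt_opNorm hlt
      obtain ⟨k₀, hk₀⟩ := hmain y {0} (singleton_subset_iff.2 (mem_ball_self one_pos))
        isCompact_singleton (ε / 2) (by positivity)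
      refine ⟨k₀, fun k hk => ?_⟩
      have h1 := hk₀ k hk 0 (mem_singleton 0)
      have h2 : ‖e (g 0) y‖ - ε / 2 ≤ ‖e (f (φ k) 0) y‖ := by
        have := norm_sub_norm_le (e (g 0) y) (e (f (φ k) 0) y)
        rw [← norm_neg (e (g 0) y - e (f (φ k) 0) y), neg_sub] at this
        linarith [this.trans h1]
      have h3 : ‖e (f (φ k) 0) y‖ ≤ ‖f (φ k) 0‖ := by
        calc ‖e (f (φ k) 0) y‖ ≤ ‖e (f (φ k) 0)‖ * ‖y‖ := (e _).le_opNorm y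
        _ ≤ ‖e (f (φ k) 0)‖ * 1 := by
            refine mul_le_mul_of_nonneg_left hy1.le (norm_nonneg _)
        _ = ‖f (φ k) 0‖ := by rw [mul_one, e.norm_map]
      linarith
    refine ⟨κ, pκ, hκne, hκdir, φ, hcofmono, ?_⟩
    intro K hK hKc L hL hLc
    rcases K.eq_empty_or_nonempty with rfl | hKne
    · exact ⟨Classical.arbitrary κ, fun k _ ζ hζ => absurd hζ (notMem_empty ζ)⟩
    rcases L.eq_empty_or_nonempty with rfl | hLne
    · exact ⟨Classical.arbitrary κ, fun k _ ζ _ => notMem_empty _⟩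
    obtain ⟨z₀, hz₀K, hz₀max⟩ := hKc.exists_isMaxOn hKne continuous_norm.continuousOn
    set R := cabs z₀ with hR_def
    have hR0 : 0 ≤ R := norm_nonneg z₀
    have hR1 : R < 1 := mem_ball_zero_iff.1 (hK hz₀K)
    have hRζ : ∀ ζ ∈ K, cabs ζ ≤ R := fun ζ hζ => hz₀max hζ
    obtain ⟨w₀, hw₀L, hw₀max⟩ := hLc.exists_isMaxOn hLne continuous_norm.continuousOn
    set cL := ‖w₀‖ with hcL_def
    have hcL1 : cL < 1 := mem_ball_zero_iff.1 (hL hw₀L)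
    have hcL0 : 0 ≤ cL := norm_nonneg _
    set C := R / Real.sqrt (1 - R ^ 2) with hC_def
    have hC0 : 0 ≤ C := by
      rw [hC_def]
      positivity
    -- choose a suitable ε by continuity
    set G : ℝ → ℝ := fun s => (1 - s) - C * Real.sqrt (1 - (1 - s) ^ 2) with hG_def
    have hGc : Continuous G := by
      rw [hG_def]
      refine (continuous_const.sub continuous_id).sub (continuous_const.mul ?_)
      exact (continuous_const.sub ((continuous_const.sub continuous_id).pow 2)).sqrt
    have hG0 : G 0 = 1 := by
      rw [hG_def]
      norm_num
    have hev : ∀ᶠ s in nhds (0:ℝ), cL < G s := by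
      have := hGc.continuousAt (x := 0)
      rw [ContinuousAt, hG0] at this
      exact this (eventually_gt_nhds hcL1)
    obtain ⟨δ', hδ'pos, hδ'⟩ := Metric.eventually_nhds_iff.1 hev
    set ε := min (δ' / 2) (1 / 2) with hε_def
    have hεpos : 0 < ε := by
      rw [hε_def]
      exact lt_min (by positivity) (by norm_num)
    have hεδ : cL < G ε := by
      refine hδ' ?_
      rw [Real.dist_eq, sub_zero, abs_of_pos hεpos]
      calc ε ≤ δ' / 2 := min_le_left _ _
      _ < δ' := by linarith
    have hεhalf : ε ≤ 1 / 2 := min_le_right _ _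
    obtain ⟨k₀, hk₀⟩ := hnear1 ε hεpos
    refine ⟨k₀, fun k hk ζ hζK hmem => ?_⟩
    -- the contradiction: the norm of f (φ k) ζ is too large to lie in L
    set F := f (φ k) with hF_def
    have hFh := hf (φ k)
    have hu1 : 1 - ε < ‖F 0‖ := hk₀ k hk
    have hu2 : ‖F 0‖ < 1 := mem_ball_zero_iff.1 (hFh.2 (mem_ball_self one_pos))
    have hFne : F 0 ≠ 0 := by
      intro h0
      rw [h0, norm_zero] at hu1
      linarith
    obtain ⟨ψ, hψn, hψv⟩ := exists_dual_vector ℂ (F 0) (norm_ne_zero_iff.mpr hFne)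
    set h : ℂ → ℂ := fun z => ψ (F z) with hh_def
    have hhd : DifferentiableOn ℂ h (ball 0 1) :=
      ψ.differentiable.comp_differentiableOn hFh.1
    have hhm : MapsTo h (ball (0:ℂ) 1) (ball (0:ℂ) 1) := by
      intro z hz
      rw [mem_ball_zero_iff]
      calc ‖ψ (F z)‖ ≤ ‖ψ‖ * ‖F z‖ := ψ.le_opNorm _
      _ = ‖F z‖ := by rw [hψn, one_mul]
      _ < 1 := mem_ball_zero_iff.1 (hFh.2 hz)
    have hh0 : cabs (h 0) = ‖F 0‖ := by
      rw [hh_def]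
      simp only [hψv]
      rw [show cabs (RCLike.ofReal (K := ℂ) ‖F 0‖) = ‖(RCLike.ofReal (K := ℂ) ‖F 0‖ : ℂ)‖ from rfl,
        RCLike.norm_ofReal, abs_of_nonneg (norm_nonneg _)]
    have hlow := schwarz_lower_bound hhd hhm (hK hζK) (hRζ ζ hζK) hR1
    rw [hh0] at hlow
    have hhle : cabs (h ζ) ≤ ‖F ζ‖ := by
      rw [hh_def]
      calc cabs (ψ (F ζ)) = ‖ψ (F ζ)‖ := rfl
      _ ≤ ‖ψ‖ * ‖F ζ‖ := ψ.le_opNorm _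
      _ = ‖F ζ‖ := by rw [hψn, one_mul]
    -- monotonicity of the sqrt bound
    have hsq : Real.sqrt (1 - ‖F 0‖ ^ 2) ≤ Real.sqrt (1 - (1 - ε) ^ 2) := by
      refine Real.sqrt_le_sqrt ?_
      have h1 : 0 ≤ 1 - ε := by linarith
      nlinarith
    have hlow2 : G ε ≤ ‖F ζ‖ := by
      rw [hG_def]
      have := mul_le_mul_of_nonneg_left hsq hC0
      calc (1 - ε) - C * Real.sqrt (1 - (1 - ε) ^ 2)
          ≤ ‖F 0‖ - C * Real.sqrt (1 - ‖F 0‖ ^ 2) := by linarith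
      _ ≤ cabs (h ζ) := hlow
      _ ≤ ‖F ζ‖ := hhle
    have hLbound : ‖F ζ‖ ≤ cL := hw₀max hmem
    linarith
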